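/- For the even-dimensional quadratic form (E,q,L) with E of rank 4 given by the Gram matrix M of a cubic fourfold Y containing a plane, if the second degeneration locus B_2 is empty then the discriminant sextic C = B_1 = {det M = 0} is smooth. -/

import Mathlib

/-!
Let `x` lie on the discriminant curve and `A = M(x)`. As `B₂ = ∅`, `A` has corank one, so its
kernel is spanned by a vector `v = (u, t)` and, `A` being symmetric, `adj A = c • v vᵀ` with
`c ≠ 0`. Jacobi's formula `∂ᵢ det M = tr (adj M · ∂ᵢ M)` then gives
`∂ᵢ det M (x) = c • vᵀ ∂ᵢM(x) v`. If all of these vanished, the point `z = (t x, u)` would be a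
singular point of `Y`: writing `F(y, w) = (w, 1)ᵀ M(y) (w, 1)`, the homogeneity of the entries of
`M` gives `F(z) = t • vᵀ A v`, `∂F/∂w (z) = 2t • (A v)_w` and `∂F/∂yᵢ (z) = vᵀ ∂ᵢM(x) v`.
-/

open MvPolynomial Matrix

theorem Derivation.leibniz_prod {R A M : Type*} [CommSemiring R] [CommSemiring A] [Algebra R A]
    [AddCommMonoid M] [Module A M] [Module R M] [IsScalarTower R A M]
    (D : Derivation R A M) {ι : Type*} [DecidableEq ι] (s : Finset ι) (f : ι → A) :
    D (∏ i ∈ s, f i) = ∑ i ∈ s, (∏ j ∈ s.erase i, f j) • D (f i) := by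
  induction s using Finset.induction_on with
  | empty => simp
  | insert a s ha ih =>
    rw [Finset.prod_insert ha, D.leibniz, ih, Finset.sum_insert ha, Finset.erase_insert ha,
      Finset.smul_sum, add_comm]
    congr 1
    refine Finset.sum_congr rfl fun i hi => ?_
    rw [Finset.erase_insert_of_ne (ne_of_mem_of_not_mem hi ha).symm,
      Finset.prod_insert fun h => ha (Finset.mem_of_mem_erase h), mul_smul]

theorem Derivation.map_det {R A : Type*} [CommRing R] [CommRing A] [Algebra R A] {n : Type*}
    [Fintype n] [DecidableEq n] (D : Derivation R A A) (M : Matrix n n A) :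
    D M.det = ∑ j, ∑ i, M.adjugate j i * D (M i j) := by
  have hcol : ∀ j, ∑ i, M.adjugate j i * D (M i j) = (M.updateCol j fun i => D (M i j)).det := by
    intro j
    rw [← cramer_apply, cramer_eq_adjugate_mulVec]
    rfl
  simp only [hcol, det_apply', map_sum]
  rw [Finset.sum_comm]
  refine Finset.sum_congr rfl fun σ _ => ?_
  rw [D.leibniz, D.map_intCast, smul_zero, add_zero, D.leibniz_prod, Finset.smul_sum]
  refine Finset.sum_congr rfl fun j _ => ?_
  rw [← Finset.mul_prod_erase _ _ (Finset.mem_univ j), updateCol_self,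
    Finset.prod_congr rfl fun i hi => updateCol_ne (Finset.ne_of_mem_erase hi), smul_eq_mul,
    smul_eq_mul]
  ring

theorem Derivation.map_dotProduct_mulVec {R A : Type*} [CommRing R] [CommRing A] [Algebra R A]
    {m : Type*} [Fintype m] (D : Derivation R A A) (w : m → A) (N : Matrix m m A) :
    D (w ⬝ᵥ N *ᵥ w) = (D ∘ w) ⬝ᵥ N *ᵥ w + w ⬝ᵥ N.map D *ᵥ w + w ⬝ᵥ N *ᵥ (D ∘ w) := by
  simp only [dotProduct, Matrix.mulVec, map_sum, Derivation.leibniz, smul_eq_mul, Finset.mul_sum,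
    ← Finset.sum_add_distrib, Function.comp_apply, Matrix.map_apply]
  refine Finset.sum_congr rfl fun a _ => Finset.sum_congr rfl fun b _ => ?_
  ring

namespace Matrix

variable {K : Type*} [Field K] {n : Type*} [Fintype n] {A : Matrix n n K} {v : n → K}

theorem ker_mulVecLin_eq_span_singleton (hA : Fintype.card n ≤ A.rank + 1) (hv : v ≠ 0)
    (hAv : A *ᵥ v = 0) : LinearMap.ker A.mulVecLin = K ∙ v := by
  have hle : K ∙ v ≤ LinearMap.ker A.mulVecLin := by
    rwa [Submodule.span_singleton_le_iff_mem, LinearMap.mem_ker, mulVecLin_apply]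
  refine (Submodule.eq_of_le_of_finrank_le hle ?_).symm
  have := LinearMap.finrank_range_add_finrank_ker A.mulVecLin
  rw [Module.finrank_fintype_fun_eq_card] at this
  rw [finrank_span_singleton hv]
  rw [rank] at hA
  omega

variable [DecidableEq n]

theorem updateCol_mulVec (i : n) (u y : n → K) :
    A.updateCol i u *ᵥ y = A *ᵥ Function.update y i 0 + y i • u := by
  ext a
  simp only [Pi.add_apply, Pi.smul_apply, smul_eq_mul, mulVec, dotProduct]
  rw [← Finset.add_sum_erase _ _ (Finset.mem_univ i),
    ← Finset.add_sum_erase _ _ (Finset.mem_univ i), updateCol_self, Function.update_self]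
  have hrest : ∀ j ∈ Finset.univ.erase i,
      A.updateCol i u a j * y j = A a j * Function.update y i 0 j := fun j hj => by
    rw [updateCol_ne (Finset.ne_of_mem_erase hj),
      Function.update_of_ne (Finset.ne_of_mem_erase hj)]
  rw [Finset.sum_congr rfl hrest]
  ring

theorem adjugate_ne_zero_of_ker_eq_span_singleton
    (hker : LinearMap.ker A.mulVecLin = K ∙ v) (hv : v ≠ 0) : A.adjugate ≠ 0 := by
  obtain ⟨u, hu⟩ : ∃ u, u ∉ LinearMap.range A.mulVecLin := by
    by_contra! h
    have hinj := LinearMap.injective_iff_surjective.mpr fun u => h u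
    rw [← LinearMap.ker_eq_bot, hker, Submodule.span_singleton_eq_bot] at hinj
    exact hv hinj
  obtain ⟨i, hi⟩ : ∃ i, v i ≠ 0 := Function.ne_iff.mp hv
  intro hadj
  -- replacing column `i` by `u` would give an invertible matrix of determinant `(adj A *ᵥ u) i`
  have hdet : (A.updateCol i u).det = 0 := by
    rw [← cramer_apply, cramer_eq_adjugate_mulVec, hadj, zero_mulVec, Pi.zero_apply]
  obtain ⟨y, hy, hAy⟩ := exists_mulVec_eq_zero_iff.mpr hdet
  rw [updateCol_mulVec] at hAy
  by_cases hyi : y i = 0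
  · rw [hyi, zero_smul, add_zero, ← mulVecLin_apply, ← LinearMap.mem_ker, hker,
      Submodule.mem_span_singleton, Function.update_eq_self_iff.mpr hyi.symm] at hAy
    obtain ⟨c, rfl⟩ := hAy
    have hc : c = 0 := by simpa [hi] using hyi
    simp [hc] at hy
  · refine hu ⟨-(y i)⁻¹ • Function.update y i 0, ?_⟩
    rw [map_smul, mulVecLin_apply, eq_neg_of_add_eq_zero_left hAy, smul_neg, neg_smul, neg_neg,
      smul_smul, inv_mul_cancel₀ hyi, one_smul]

theorem exists_adjugate_eq_smul_vecMulVec (hsymm : A.IsSymm) (hA : Fintype.card n ≤ A.rank + 1)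
    (hv : v ≠ 0) (hAv : A *ᵥ v = 0) : ∃ c : K, c ≠ 0 ∧ A.adjugate = c • vecMulVec v v := by
  have hker := ker_mulVecLin_eq_span_singleton hA hv hAv
  have hdet : A.det = 0 := exists_mulVec_eq_zero_iff.mp ⟨v, hv, hAv⟩
  have hcol : ∀ j, ∃ c : K, A.adjugate.col j = c • v := fun j => by
    have : A *ᵥ A.adjugate.col j = 0 := by
      rw [← mulVec_single_one, mulVec_mulVec, mul_adjugate, hdet, zero_smul, zero_mulVec]
    rw [← mulVecLin_apply, ← LinearMap.mem_ker, hker, Submodule.mem_span_singleton] at this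
    obtain ⟨c, hc⟩ := this
    exact ⟨c, hc.symm⟩
  choose w hw using hcol
  have hadj : ∀ a b, A.adjugate a b = v a * w b := fun a b => by
    rw [← col_apply A.adjugate b a, hw, Pi.smul_apply, smul_eq_mul, mul_comm]
  obtain ⟨i, hi⟩ : ∃ i, v i ≠ 0 := Function.ne_iff.mp hv
  have hwv : ∀ a, w a = w i / v i * v a := fun a => by
    rw [div_mul_eq_mul_div, eq_div_iff hi, mul_comm, ← hadj, ← hsymm.adjugate.apply, hadj,
      mul_comm]
  refine ⟨w i / v i, fun hc => adjugate_ne_zero_of_ker_eq_span_singleton hker hv ?_, ?_⟩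
  · ext a b
    simp [hadj, hwv b, hc]
  · ext a b
    rw [hadj, hwv b, smul_apply, vecMulVec_apply, smul_eq_mul]
    ring

end Matrix

theorem MvPolynomial.IsHomogeneous.eval_smul {R σ : Type*} [CommSemiring R]
    {p : MvPolynomial σ R} {n : ℕ} (hp : p.IsHomogeneous n) (c : R) (x : σ → R) :
    eval (c • x) p = c ^ n * eval x p := by
  rw [eval_eq, eval_eq, Finset.mul_sum]
  refine Finset.sum_congr rfl fun d hd => ?_
  have hdeg : ∑ i ∈ d.support, d i = n := by
    simpa [Finsupp.weight_apply, Finsupp.sum] using hp (mem_support_iff.mp hd)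
  simp only [Pi.smul_apply, smul_eq_mul, mul_pow, Finset.prod_mul_distrib,
    Finset.prod_pow_eq_pow_sum, hdeg]
  ring

theorem Matrix.map_eval_smul_of_isHomogeneous {R σ m : Type*} [CommSemiring R] [Fintype m]
    [DecidableEq m] {N : Matrix m m (MvPolynomial σ R)} {d : ℕ} {e : m → ℕ}
    (hN : ∀ a b, (N a b).IsHomogeneous (d + e a + e b)) (t : R) (x : σ → R) :
    N.map (eval (t • x)) =
      t ^ d • (diagonal (fun a => t ^ e a) * N.map (eval x) * diagonal (fun a => t ^ e a)) := by
  ext a b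
  simp only [map_apply, (hN a b).eval_smul, smul_apply, mul_diagonal, diagonal_mul, smul_eq_mul]
  ring

variable {σ R : Type*} [CommRing R]

theorem eval_pderiv_det_of_adjugate_eq {m : Type*} [Fintype m] [DecidableEq m]
    {M : Matrix m m (MvPolynomial σ R)} {x : σ → R} {c : R} {v : m → R}
    (hadj : (M.map (eval x)).adjugate = c • Matrix.vecMulVec v v) (i : σ) :
    eval x (pderiv i M.det) = c * (v ⬝ᵥ M.map (fun p => eval x (pderiv i p)) *ᵥ v) := by
  have hentry : ∀ j k, eval x (M.adjugate j k) = c * (v j * v k) := fun j k => by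
    rw [show eval x (M.adjugate j k) = (M.map (eval x)).adjugate j k from
      congrFun₂ ((eval x).map_adjugate M) j k, hadj]
    rfl
  simp only [Derivation.map_det, map_sum, map_mul, hentry, dotProduct, Matrix.mulVec,
    Matrix.map_apply, Finset.mul_sum]
  rw [Finset.sum_comm]
  refine Finset.sum_congr rfl fun a _ => Finset.sum_congr rfl fun b _ => ?_
  ring

section QuadricFibration

variable (σ R) in
noncomputable def fibreCoords (n : ℕ) : Fin (n + 1) → MvPolynomial (σ ⊕ Fin n) R :=
  Fin.snoc (fun k => X (Sum.inr k)) 1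

/-- `F(y, w) = (w, 1)ᵀ M(y) (w, 1)`, in coordinates `y` on the base (variables `Sum.inl`) and `w`
on the fibre (variables `Sum.inr`). -/
noncomputable def quadricFibrationEquation {n : ℕ}
    (M : Matrix (Fin (n + 1)) (Fin (n + 1)) (MvPolynomial σ R)) : MvPolynomial (σ ⊕ Fin n) R :=
  fibreCoords σ R n ⬝ᵥ M.map (rename Sum.inl) *ᵥ fibreCoords σ R n

variable {n : ℕ} {M : Matrix (Fin (n + 1)) (Fin (n + 1)) (MvPolynomial σ R)}

theorem eval_comp_fibreCoords (y : σ → R) (u : Fin n → R) :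
    eval (Sum.elim y u) ∘ fibreCoords σ R n = Fin.snoc u 1 := by
  ext a
  induction a using Fin.lastCases <;> simp [fibreCoords]

theorem eval_comp_map_rename_mulVec_fibreCoords (y : σ → R) (u : Fin n → R) :
    eval (Sum.elim y u) ∘ (M.map (rename Sum.inl) *ᵥ fibreCoords σ R n) =
      M.map (eval y) *ᵥ Fin.snoc u 1 := by
  ext a
  rw [Function.comp_apply, RingHom.map_mulVec, eval_comp_fibreCoords, map_map]
  congr 2
  ext p
  simp [eval_rename]

theorem eval_quadricFibrationEquation (y : σ → R) (u : Fin n → R) :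
    eval (Sum.elim y u) (quadricFibrationEquation M) =
      Fin.snoc u 1 ⬝ᵥ M.map (eval y) *ᵥ Fin.snoc u 1 := by
  rw [quadricFibrationEquation, RingHom.map_dotProduct, eval_comp_fibreCoords,
    eval_comp_map_rename_mulVec_fibreCoords]

theorem pderiv_inr_rename_inl {τ : Type*} (k : τ) (p : MvPolynomial σ R) :
    pderiv (Sum.inr k) (rename Sum.inl p) = 0 := by
  classical
  refine pderiv_eq_zero_of_notMem_vars fun hk => ?_
  obtain ⟨i, -, hi⟩ := Finset.mem_image.mp (vars_rename _ p hk)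
  exact Sum.inl_ne_inr hi

theorem pderiv_inl_comp_fibreCoords (i : σ) :
    pderiv (Sum.inl i) ∘ fibreCoords σ R n = 0 := by
  ext1 a
  induction a using Fin.lastCases <;> simp [fibreCoords, pderiv_X_of_ne]

theorem pderiv_inr_comp_fibreCoords (k : Fin n) :
    pderiv (Sum.inr k) ∘ fibreCoords σ R n = Pi.single k.castSucc 1 := by
  classical
  ext1 a
  induction a using Fin.lastCases <;> simp [fibreCoords, pderiv_X, Pi.single_apply]

theorem pderiv_inl_quadricFibrationEquation (i : σ) :
    pderiv (Sum.inl i) (quadricFibrationEquation M) =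
      quadricFibrationEquation (M.map (pderiv i)) := by
  rw [quadricFibrationEquation, Derivation.map_dotProduct_mulVec, pderiv_inl_comp_fibreCoords,
    zero_dotProduct, mulVec_zero, dotProduct_zero, zero_add, add_zero, map_map,
    quadricFibrationEquation, map_map]
  congr 3
  funext p
  exact pderiv_rename Sum.inl_injective i p

theorem pderiv_inr_quadricFibrationEquation (hM : M.IsSymm) (k : Fin n) :
    pderiv (Sum.inr k) (quadricFibrationEquation M) =
      2 * (M.map (rename Sum.inl) *ᵥ fibreCoords σ R n) k.castSucc := by
  rw [quadricFibrationEquation, Derivation.map_dotProduct_mulVec, pderiv_inr_comp_fibreCoords]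
  have hconst : (M.map (rename Sum.inl)).map (pderiv (Sum.inr k)) = 0 := by
    ext1 a b
    exact pderiv_inr_rename_inl k (M a b)
  rw [hconst, zero_mulVec, dotProduct_zero, add_zero, single_one_dotProduct, dotProduct_mulVec,
    dotProduct_single_one, ← mulVec_transpose, (hM.map _).eq, two_mul]

end QuadricFibration

section GramMatrix

variable {n : ℕ}

/-- The entries of the Gram matrix of a cubic containing a plane have degrees `1`, `2`, `3`, that is
`1 + gramWeight n a + gramWeight n b`. -/
def gramWeight (n : ℕ) : Fin (n + 1) → ℕ :=
  Fin.snoc 0 1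

theorem diagonal_pow_gramWeight_mulVec_snoc_init (v : Fin (n + 1) → R) :
    diagonal (fun a => v (Fin.last n) ^ gramWeight n a) *ᵥ Fin.snoc (Fin.init v) 1 = v := by
  ext a
  induction a using Fin.lastCases <;> simp [mulVec_diagonal, gramWeight, Fin.init]

variable {N : Matrix (Fin (n + 1)) (Fin (n + 1)) (MvPolynomial σ R)} {d : ℕ}

theorem map_eval_smul_mulVec_snoc_init
    (hN : ∀ a b, (N a b).IsHomogeneous (d + gramWeight n a + gramWeight n b))
    (x : σ → R) (v : Fin (n + 1) → R) :
    N.map (eval (v (Fin.last n) • x)) *ᵥ Fin.snoc (Fin.init v) 1 =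
      v (Fin.last n) ^ d • diagonal (fun a => v (Fin.last n) ^ gramWeight n a) *ᵥ
        (N.map (eval x) *ᵥ v) := by
  rw [map_eval_smul_of_isHomogeneous hN, smul_mulVec, ← mulVec_mulVec, ← mulVec_mulVec,
    diagonal_pow_gramWeight_mulVec_snoc_init]

theorem snoc_init_dotProduct_map_eval_smul_mulVec_snoc_init
    (hN : ∀ a b, (N a b).IsHomogeneous (d + gramWeight n a + gramWeight n b))
    (x : σ → R) (v : Fin (n + 1) → R) :
    Fin.snoc (Fin.init v) 1 ⬝ᵥ N.map (eval (v (Fin.last n) • x)) *ᵥ Fin.snoc (Fin.init v) 1 =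
      v (Fin.last n) ^ d * (v ⬝ᵥ N.map (eval x) *ᵥ v) := by
  rw [map_eval_smul_mulVec_snoc_init hN, dotProduct_smul, dotProduct_mulVec, ← mulVec_transpose,
    diagonal_transpose, diagonal_pow_gramWeight_mulVec_snoc_init, smul_eq_mul]

end GramMatrix

theorem sumElim_smul_init_ne_zero [NoZeroDivisors R] {n : ℕ} {x : σ → R} {v : Fin (n + 1) → R}
    (hx : x ≠ 0) (hv : v ≠ 0) : Sum.elim (v (Fin.last n) • x) (Fin.init v) ≠ 0 := by
  intro h
  have hu : Fin.init v = 0 := funext fun k => congrFun h (Sum.inr k)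
  have htx : v (Fin.last n) • x = 0 := funext fun i => congrFun h (Sum.inl i)
  obtain ht | hx' := smul_eq_zero.mp htx
  · refine hv (funext fun a => ?_)
    induction a using Fin.lastCases with
    | last => exact ht
    | cast k => exact congrFun hu k
  · exact hx hx'

theorem quadricFibrationEquation_singular {n : ℕ}
    {M : Matrix (Fin (n + 1)) (Fin (n + 1)) (MvPolynomial σ R)} (hM : M.IsSymm)
    (hhom : ∀ a b, (M a b).IsHomogeneous (1 + gramWeight n a + gramWeight n b))
    {x : σ → R} {v : Fin (n + 1) → R} (hAv : M.map (eval x) *ᵥ v = 0)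
    (hquad : ∀ i, v ⬝ᵥ M.map (fun p => eval x (pderiv i p)) *ᵥ v = 0) :
    eval (Sum.elim (v (Fin.last n) • x) (Fin.init v)) (quadricFibrationEquation M) = 0 ∧
      ∀ s, eval (Sum.elim (v (Fin.last n) • x) (Fin.init v))
        (pderiv s (quadricFibrationEquation M)) = 0 := by
  refine ⟨?_, fun s => ?_⟩
  · rw [eval_quadricFibrationEquation, snoc_init_dotProduct_map_eval_smul_mulVec_snoc_init hhom,
      hAv, dotProduct_zero, mul_zero]
  cases s with
  | inl i =>
    have hhom' : ∀ a b,
        (M.map (pderiv i) a b).IsHomogeneous (0 + gramWeight n a + gramWeight n b) :=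
      fun a b => by simpa [add_assoc] using (hhom a b).pderiv
    rw [pderiv_inl_quadricFibrationEquation, eval_quadricFibrationEquation,
      snoc_init_dotProduct_map_eval_smul_mulVec_snoc_init hhom', map_map]
    exact mul_eq_zero_of_right _ (hquad i)
  | inr k =>
    have h := congrFun (eval_comp_map_rename_mulVec_fibreCoords (M := M) (v (Fin.last n) • x)
      (Fin.init v)) k.castSucc
    rw [Function.comp_apply, map_eval_smul_mulVec_snoc_init hhom, hAv, mulVec_zero, smul_zero]
      at h
    rw [pderiv_inr_quadricFibrationEquation hM, map_mul, h, Pi.zero_apply, mul_zero]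

section CubicContainingPlane

variable {n : ℕ} {l : Fin n → Fin n → MvPolynomial σ R} {q : Fin n → MvPolynomial σ R}
  {f : MvPolynomial σ R} {M : Matrix (Fin (n + 1)) (Fin (n + 1)) (MvPolynomial σ R)}

theorem isSymm_of_blocks (hlsym : ∀ i j, l i j = l j i)
    (hM₁ : ∀ i j : Fin n, M i.castSucc j.castSucc = l i j)
    (hM₂ : ∀ i : Fin n, M i.castSucc (Fin.last n) = q i)
    (hM₃ : ∀ i : Fin n, M (Fin.last n) i.castSucc = q i) : M.IsSymm := by
  refine IsSymm.ext fun a b => ?_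
  induction a using Fin.lastCases <;> induction b using Fin.lastCases <;>
    simp [hM₁, hM₂, hM₃, hlsym]

theorem isHomogeneous_of_blocks (hl : ∀ i j, (l i j).IsHomogeneous 1)
    (hq : ∀ k, (q k).IsHomogeneous 2) (hf : f.IsHomogeneous 3)
    (hM₁ : ∀ i j : Fin n, M i.castSucc j.castSucc = l i j)
    (hM₂ : ∀ i : Fin n, M i.castSucc (Fin.last n) = q i)
    (hM₃ : ∀ i : Fin n, M (Fin.last n) i.castSucc = q i)
    (hM₄ : M (Fin.last n) (Fin.last n) = f) (a b : Fin (n + 1)) :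
    (M a b).IsHomogeneous (1 + gramWeight n a + gramWeight n b) := by
  induction a using Fin.lastCases <;> induction b using Fin.lastCases <;>
    simp [gramWeight, hM₁, hM₂, hM₃, hM₄, hl, hq, hf]

theorem quadricFibrationEquation_eq_of_blocks
    (hM₁ : ∀ i j : Fin n, M i.castSucc j.castSucc = l i j)
    (hM₂ : ∀ i : Fin n, M i.castSucc (Fin.last n) = q i)
    (hM₃ : ∀ i : Fin n, M (Fin.last n) i.castSucc = q i)
    (hM₄ : M (Fin.last n) (Fin.last n) = f) :
    quadricFibrationEquation M =
      (∑ i, ∑ j, rename Sum.inl (l i j) * X (Sum.inr i) * X (Sum.inr j))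
        + 2 * (∑ k, rename Sum.inl (q k) * X (Sum.inr k)) + rename Sum.inl f := by
  rw [two_mul]
  simp only [quadricFibrationEquation, fibreCoords, dotProduct, mulVec, Fin.sum_univ_castSucc,
    map_apply, Fin.snoc_castSucc, Fin.snoc_last, hM₁, hM₂, hM₃, hM₄, Finset.mul_sum, mul_add,
    Finset.sum_add_distrib, one_mul, mul_one, ← mul_assoc,
    mul_comm (X (Sum.inr _)) (rename Sum.inl _)]
  ring

end CubicContainingPlane

/-- For the rank-4 quadratic form given by the Gram matrix `M` of a smooth cubic
fourfold `Y ⊂ P⁵` containing a plane (`l` linear `3×3` block, `q` quadratic vector, `f` cubic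
entry), if the second degeneration locus `B₂` is empty (every fibre matrix has rank `≥ 3`),
then the discriminant sextic `C = B₁ = {det M = 0}` is smooth. -/
theorem discriminant_sextic_smooth_of_B2_empty
    (l : Fin 3 → Fin 3 → MvPolynomial (Fin 3) ℂ)
    (q : Fin 3 → MvPolynomial (Fin 3) ℂ) (f : MvPolynomial (Fin 3) ℂ)
    (hl : ∀ i j, (l i j).IsHomogeneous 1) (hlsym : ∀ i j, l i j = l j i)
    (hq : ∀ k, (q k).IsHomogeneous 2) (hf : f.IsHomogeneous 3)
    (M : Matrix (Fin 4) (Fin 4) (MvPolynomial (Fin 3) ℂ))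
    (hM₁ : ∀ i j : Fin 3, M i.castSucc j.castSucc = l i j)
    (hM₂ : ∀ i : Fin 3, M i.castSucc (Fin.last 3) = q i)
    (hM₃ : ∀ i : Fin 3, M (Fin.last 3) i.castSucc = q i)
    (hM₄ : M (Fin.last 3) (Fin.last 3) = f)
    (F : MvPolynomial (Fin 3 ⊕ Fin 3) ℂ)
    (hF : F = (∑ i, ∑ j, rename Sum.inl (l i j) * X (Sum.inr i) * X (Sum.inr j))
            + 2 * (∑ k, rename Sum.inl (q k) * X (Sum.inr k))
            + rename Sum.inl f)
    -- smoothness of the cubic fourfold `Y = {F = 0}`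
    (hYsmooth : ∀ z : Fin 3 ⊕ Fin 3 → ℂ, z ≠ 0 → eval z F = 0 →
      ∃ i, eval z (pderiv i F) ≠ 0)
    -- the second degeneration locus is empty
    (hB₂ : ∀ x : Fin 3 → ℂ, x ≠ 0 → 3 ≤ (M.map (eval x)).rank) :
    -- the discriminant sextic `C = {det M = 0}` is smooth
    ∀ x : Fin 3 → ℂ, x ≠ 0 → eval x M.det = 0 →
      ∃ i, eval x (pderiv i M.det) ≠ 0 := by
  intro x hx hdet
  have hsymm := isSymm_of_blocks hlsym hM₁ hM₂ hM₃
  obtain ⟨v, hv, hAv⟩ :=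
    exists_mulVec_eq_zero_iff.mpr ((RingHom.map_det (eval x) M).symm.trans hdet)
  obtain ⟨c, hc, hadj⟩ :=
    exists_adjugate_eq_smul_vecMulVec (hsymm.map _) (by simpa using hB₂ x hx) hv hAv
  by_contra! hcrit
  have hquad : ∀ i, v ⬝ᵥ M.map (fun p => eval x (pderiv i p)) *ᵥ v = 0 := fun i => by
    simpa [eval_pderiv_det_of_adjugate_eq hadj, hc] using hcrit i
  obtain ⟨hFz, hdFz⟩ := quadricFibrationEquation_singular hsymm
    (isHomogeneous_of_blocks hl hq hf hM₁ hM₂ hM₃ hM₄) hAv hquad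
  rw [quadricFibrationEquation_eq_of_blocks hM₁ hM₂ hM₃ hM₄, ← hF] at hFz hdFz
  obtain ⟨s, hs⟩ := hYsmooth _ (sumElim_smul_init_ne_zero hx hv) hFz
  exact hs (hdFz s)
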